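/- On a manifold of nonpositive curvature, the rank function $\operatorname{rank} : UM \to \{1, \ldots, n\}$, assigning to each unit vector $v$ the dimension of the space of parallel Jacobi fields along $\gamma_v$ with vanishing initial derivative, is upper semicontinuous: if $v_n \to v$ then $\limsup \operatorname{rank}(v_n) \le \operatorname{rank}(v)$. -/

import Mathlib

/-!
The rank set at `v` is the fibre over `v` of the closed set `{(u, ξ) | ∀ t, 𝔧(t, u, ξ) = 0}`.
Choose a complement `C` of the rank space at `v`. The unit sphere of `C` is compact and misses
the fibre over `v`, so by the tube lemma it misses the fibres over all `u` near `v`; by scaling,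
the rank space at such `u` meets `C` only in `0`, hence its dimension is at most
`dim E - dim C = rank v`.
-/

open Filter Topology Module

theorem Submodule.finrank_le_of_disjoint_of_isCompl {K V : Type*} [DivisionRing K]
    [AddCommGroup V] [Module K V] [FiniteDimensional K V] {S S' C : Submodule K V}
    (hS : Disjoint S C) (hS' : IsCompl S' C) : finrank K S ≤ finrank K S' := by
  have hle := Submodule.finrank_add_finrank_le_of_disjoint hS
  have heq := Submodule.finrank_add_eq_of_isCompl hS'
  omega

section

variable {E : Type*} [NormedAddCommGroup E] [NormedSpace ℝ E]

theorem Submodule.disjoint_of_forall_norm_eq_one {S C : Submodule ℝ E}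
    (h : ∀ ξ ∈ C, ‖ξ‖ = 1 → ξ ∉ S) : Disjoint S C := by
  rw [Submodule.disjoint_def]
  intro ξ hξS hξC
  by_contra hξ
  exact h _ (C.smul_mem _ hξC) (norm_smul_inv_norm hξ) (S.smul_mem _ hξS)

theorem eventually_finrank_le_of_isClosed [FiniteDimensional ℝ E] {U : Type*}
    [TopologicalSpace U] {Z : Set (U × E)} (hZ : IsClosed Z) {v : U} {Sv : Submodule ℝ E}
    (hSv : ∀ ξ, (v, ξ) ∈ Z → ξ ∈ Sv) :
    ∀ᶠ u in 𝓝 v, ∀ Su : Submodule ℝ E, (∀ ξ ∈ Su, (u, ξ) ∈ Z) →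
      finrank ℝ Su ≤ finrank ℝ Sv := by
  obtain ⟨C, hC⟩ := Sv.exists_isCompl
  have hsphere : IsCompact ((C : Set E) ∩ Metric.sphere 0 1) :=
    (isCompact_sphere 0 1).inter_left C.closed_of_finiteDimensional
  have hv : ∀ ξ ∈ (C : Set E) ∩ Metric.sphere 0 1, ∀ᶠ p : U × E in 𝓝 (v, ξ), p ∉ Z := by
    rintro ξ ⟨hξC, hξ⟩
    refine hZ.isOpen_compl.mem_nhds fun hvξ => ?_
    have hξ0 : ξ = 0 := Submodule.disjoint_def.mp hC.disjoint ξ (hSv ξ hvξ) hξC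
    simp [hξ0] at hξ
  have hnear : ∀ᶠ u in 𝓝 v, ∀ ξ ∈ (C : Set E) ∩ Metric.sphere 0 1, (u, ξ) ∉ Z :=
    hsphere.eventually_forall_of_forall_eventually hv
  filter_upwards [hnear] with u hu Su hSu
  refine Submodule.finrank_le_of_disjoint_of_isCompl ?_ hC
  exact Submodule.disjoint_of_forall_norm_eq_one fun ξ hξC hξ hξSu =>
    hu ξ ⟨hξC, by simpa using hξ⟩ (hSu ξ hξSu)

end

/-- Semicontinuity of the rank.  In a local trivialisation the horizontal
bundle over the unit tangent bundle `U` is `U × E` with `E = ℝⁿ`, and the continuous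
function `𝔧(t, v, ξ) = ‖J_ξ(t)‖² - ‖J_ξ(0)‖²` cuts out, for each `v`, the subspace
`Rank_v = {ξ | ∀ t, 𝔧(t,v,ξ) = 0}` whose dimension is the rank of `v`.  Then for every
`v` there is a neighbourhood `W` of `v` such that `rank u ≤ rank v` for all `u ∈ W`;
i.e. the set `{v : rank v ≤ k}` is open. -/
theorem rank_upper_semicontinuous
    {U : Type*} [TopologicalSpace U] {n : ℕ}
    (𝔧 : ℝ → U → EuclideanSpace ℝ (Fin n) → ℝ)
    (hcont : Continuous fun p : ℝ × U × EuclideanSpace ℝ (Fin n) => 𝔧 p.1 p.2.1 p.2.2)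
    (v : U) (Sv : Submodule ℝ (EuclideanSpace ℝ (Fin n)))
    (hSv : (Sv : Set (EuclideanSpace ℝ (Fin n))) = {ξ | ∀ t : ℝ, 𝔧 t v ξ = 0}) :
    ∃ W ∈ nhds v, ∀ u ∈ W, ∀ Su : Submodule ℝ (EuclideanSpace ℝ (Fin n)),
      (Su : Set (EuclideanSpace ℝ (Fin n))) = {ξ | ∀ t : ℝ, 𝔧 t u ξ = 0} →
      Module.finrank ℝ Su ≤ Module.finrank ℝ Sv := by
  have hZ : IsClosed {p : U × EuclideanSpace ℝ (Fin n) | ∀ t, 𝔧 t p.1 p.2 = 0} := by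
    simp only [Set.ofPred_forall]
    exact isClosed_iInter fun t =>
      isClosed_eq (hcont.comp (continuous_const.prodMk continuous_id)) continuous_const
  have hle := eventually_finrank_le_of_isClosed hZ (v := v) (Sv := Sv) fun ξ hξ => by
    rw [← SetLike.mem_coe, hSv]
    exact hξ
  refine ⟨_, hle, fun u hu Su hSu => hu Su fun ξ hξ => ?_⟩
  rw [← SetLike.mem_coe, hSu] at hξ
  exact hξ
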